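/- arXiv:2205.12932 — 2 statements merged into one kernel-verified Lean document; each statement's English description precedes it below -/
import Mathlib

section
/- Define G(n) for positive integers n by: if every prime factor of n is congruent to 1 mod 4, then G(n) = 2n + 1; otherwise G(n) = n with all prime factors not congruent to 1 mod 4 divided out (i.e. G(n) = ∏_{p ≡ 1 mod 4} p^{v_p(n)}). Then for every positive integer n, some iterate of G applied to n equals 1. -/
/-- The product of the prime-power factors of `n` for primes `p ≡ 1 (mod 4)`. -/
def holdout1mod4 (n : ℕ) : ℕ :=
  ∏ p ∈ n.primeFactors.filter (fun p => p % 4 = 1), p ^ n.factorization p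

/-- The infinite holdout map `G` for `c = 2` and holdout set `{p prime | p ≡ 1 (mod 4)}`. -/
def Ginf (n : ℕ) : ℕ :=
  if n = holdout1mod4 n then 2 * n + 1 else holdout1mod4 n

lemma holdout_dvd (n : ℕ) (hn : n ≠ 0) : holdout1mod4 n ∣ n := by
  rw [holdout1mod4]
  conv_rhs => rw [← Nat.factorization_prod_pow_eq_self hn]
  rw [Nat.prod_factorization_eq_prod_primeFactors]
  exact Finset.prod_dvd_prod_of_subset _ _ _ (Finset.filter_subset _ _)

lemma holdout_mod4 (n : ℕ) : holdout1mod4 n % 4 = 1 := by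
  rw [holdout1mod4, Finset.prod_nat_mod]
  have h : ∀ p ∈ n.primeFactors.filter (fun p => p % 4 = 1),
      p ^ n.factorization p % 4 = 1 := by
    intro p hp
    rw [Finset.mem_filter] at hp
    rw [Nat.pow_mod, hp.2, one_pow]; rfl
  rw [Finset.prod_congr rfl h]
  simp

lemma holdout_pos (n : ℕ) (hn : 0 < n) : 0 < holdout1mod4 n :=
  Nat.pos_of_dvd_of_pos (holdout_dvd n hn.ne') hn

theorem stmt_16 (n : ℕ) (hn : 0 < n) : ∃ k : ℕ, Ginf^[k] n = 1 := by
  revert hn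
  induction n using Nat.strong_induction_on with
  | _ n ih =>
  intro hn
  by_cases h : n = holdout1mod4 n
  · -- all prime factors of n are ≡ 1 mod 4, so n ≡ 1 mod 4
    have hn4 : n % 4 = 1 := by rw [h]; exact holdout_mod4 n
    by_cases h1 : n = 1
    · subst h1
      refine ⟨2, ?_⟩
      have g1 : Ginf 1 = 3 := by simp [Ginf, holdout1mod4]
      have g3 : Ginf 3 = 1 := by
        have hd := holdout_dvd 3 (by norm_num)
        have hm := holdout_mod4 3
        have hle := Nat.le_of_dvd (by norm_num) hd
        have h3 : holdout1mod4 3 = 1 := by omega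
        simp [Ginf, h3]
      rw [show (2 : ℕ) = 1 + 1 from rfl, Function.iterate_succ_apply,
        g1, Function.iterate_succ_apply, g3, Function.iterate_zero_apply]
    · have hn5 : 5 ≤ n := by omega
      set m := 2 * n + 1 with hm
      have hmpos : m ≠ 0 := by omega
      have hm4 : m % 4 = 3 := by omega
      have hmne : m ≠ holdout1mod4 m := by
        intro e; have := holdout_mod4 m; omega
      have hG1 : Ginf n = m := by rw [Ginf, if_pos h]
      have hG2 : Ginf m = holdout1mod4 m := by rw [Ginf, if_neg hmne]
      set h2 := holdout1mod4 m with hh2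
      obtain ⟨q, hq⟩ := holdout_dvd m hmpos
      have hmodd : Odd m := ⟨n, by omega⟩
      rw [hq, Nat.odd_mul] at hmodd
      obtain ⟨a, ha⟩ := hmodd.2
      have hqne1 : q ≠ 1 := by
        intro e; apply hmne; rw [hq, e, mul_one]
      have hq3 : 3 ≤ q := by omega
      have hkey : 3 * h2 ≤ m := by
        calc 3 * h2 ≤ q * h2 := Nat.mul_le_mul_right _ hq3
        _ = m := by rw [hq, mul_comm]
      have hlt : h2 < n := by omega
      have hpos : 0 < h2 := holdout_pos m (by omega)
      obtain ⟨k, hk⟩ := ih h2 hlt hpos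
      refine ⟨k + 2, ?_⟩
      rw [show k + 2 = (k + 1) + 1 from rfl, Function.iterate_succ_apply, hG1,
        Function.iterate_succ_apply, hG2, hk]
  · have hG : Ginf n = holdout1mod4 n := by rw [Ginf, if_neg h]
    have hd := holdout_dvd n hn.ne'
    have hlt : holdout1mod4 n < n :=
      lt_of_le_of_ne (Nat.le_of_dvd hn hd) (Ne.symm h)
    have hpos := holdout_pos n hn
    obtain ⟨k, hk⟩ := ih _ hlt hpos
    exact ⟨k + 1, by rw [Function.iterate_succ_apply, hG, hk]⟩
end

section
/- Define h(n) = 2^{v₂(n)} · 3^{v₃(n)} and G(n) = 5n + 1 if n = h(n), else G(n) = h(n). Then for every positive integer n, some iterate of G applied to n equals 1. -/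
/-- `h(n) = 2^{v₂(n)} · 3^{v₃(n)}`. -/
def holdout23 (n : ℕ) : ℕ := 2 ^ padicValNat 2 n * 3 ^ padicValNat 3 n

/-- The holdout map of `H_{5,{2,3}}`. -/
def G523 (n : ℕ) : ℕ :=
  if n = holdout23 n then 5 * n + 1 else holdout23 n

/-!
A number `n` that is not `3`-smooth is sent to its proper divisor `h(n)`. A `3`-smooth `n` is sent
to `5n + 1`; if that is not `3`-smooth, its cofactor `(5n + 1) / h(5n + 1)` is prime to `30`
and `≠ 1`, hence `≥ 7`, so the next step lands below `n`. Strong induction therefore reduces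
everything to the `3`-smooth `n = 2^a 3^b` with `5n + 1 = 2^c 3^d` as well. Parity and
divisibility by `3` force `n` to be a pure power; then `5 · 3^b + 1 = 2^c` with `b ≥ 2` is ruled
out by `2^c ≡ 1 (mod 9) ⇒ 6 ∣ c ⇒ 7 ∣ 2^c - 1`, and `5 · 2^a + 1 = 3^d` with `a ≥ 5` by
`3^d ≡ 1 (mod 32) ⇒ 8 ∣ d ⇒ 41 ∣ 3^d - 1`. The survivors `1, 3, 16` reach `1` along
`3 ↦ 16 ↦ 81 ↦ 406 ↦ 2 ↦ 11 ↦ 1`.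
-/

theorem Function.exists_iterate_eq_of_exists_iterate_apply_eq {α : Type*} {f : α → α} {x y : α}
    (h : ∃ k, f^[k] (f x) = y) : ∃ k, f^[k] x = y :=
  let ⟨k, hk⟩ := h
  ⟨k + 1, hk⟩

theorem Nat.pow_mod_eq_of_pow_mod_eq_one {x k m : ℕ} (h : x ^ k % m = 1) (c : ℕ) :
    x ^ c % m = x ^ (c % k) % m := by
  have hm : m ≠ 1 := by rintro rfl; rw [Nat.mod_one] at h; exact zero_ne_one h
  conv_lhs => rw [← Nat.div_add_mod c k, pow_add, pow_mul, Nat.mul_mod, Nat.pow_mod, h, one_pow,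
    Nat.one_mod_eq_one.2 hm, one_mul, Nat.mod_mod]

theorem Nat.eq_zero_of_pow_dvd_add_one {p x k : ℕ} (hp : p ≠ 1) (hx : p ∣ x)
    (h : p ^ k ∣ x + 1) : k = 0 := by
  by_contra hk
  exact hp (Nat.dvd_one.1 ((Nat.dvd_add_right hx).1 ((dvd_pow_self p hk).trans h)))

theorem two_pow_mod_seven_of_mod_nine {c : ℕ} (h : 2 ^ c % 9 = 1) : 2 ^ c % 7 = 1 := by
  have periodic : ∀ r < 6, 2 ^ r % 9 = 1 → 2 ^ r % 7 = 1 := by decide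
  rw [Nat.pow_mod_eq_of_pow_mod_eq_one (by norm_num : 2 ^ 6 % 9 = 1)] at h
  rw [Nat.pow_mod_eq_of_pow_mod_eq_one (by norm_num : 2 ^ 6 % 7 = 1)]
  exact periodic _ (c.mod_lt (by norm_num)) h

theorem three_pow_mod_fortyOne_of_mod_thirtyTwo {d : ℕ} (h : 3 ^ d % 32 = 1) :
    3 ^ d % 41 = 1 := by
  have periodic : ∀ r < 8, 3 ^ r % 32 = 1 → 3 ^ r % 41 = 1 := by decide
  rw [Nat.pow_mod_eq_of_pow_mod_eq_one (by norm_num : 3 ^ 8 % 32 = 1)] at h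
  rw [Nat.pow_mod_eq_of_pow_mod_eq_one (by norm_num : 3 ^ 8 % 41 = 1)]
  exact periodic _ (d.mod_lt (by norm_num)) h

theorem five_mul_three_pow_add_one_ne_two_pow {b : ℕ} (hb : 2 ≤ b) (c : ℕ) :
    5 * 3 ^ b + 1 ≠ 2 ^ c := by
  intro h
  obtain ⟨t, ht⟩ : 9 ∣ 3 ^ b := pow_dvd_pow 3 hb
  have h7 := two_pow_mod_seven_of_mod_nine (c := c) (by omega)
  have hcop : Nat.Coprime 7 (5 * 3 ^ b) :=
    Nat.Coprime.mul_right (by norm_num) (Nat.Coprime.pow_right _ (by norm_num))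
  exact absurd (hcop.eq_one_of_dvd (Nat.dvd_of_mod_eq_zero (by omega))) (by norm_num)

theorem five_mul_two_pow_add_one_ne_three_pow {a : ℕ} (ha : 5 ≤ a) (d : ℕ) :
    5 * 2 ^ a + 1 ≠ 3 ^ d := by
  intro h
  obtain ⟨t, ht⟩ : 32 ∣ 2 ^ a := pow_dvd_pow 2 ha
  have h41 := three_pow_mod_fortyOne_of_mod_thirtyTwo (d := d) (by omega)
  have hcop : Nat.Coprime 41 (5 * 2 ^ a) :=
    Nat.Coprime.mul_right (by norm_num) (Nat.Coprime.pow_right _ (by norm_num))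
  exact absurd (hcop.eq_one_of_dvd (Nat.dvd_of_mod_eq_zero (by omega))) (by norm_num)

theorem eq_of_five_mul_two_pow_mul_three_pow_add_one_eq {a b c d : ℕ}
    (h : 5 * (2 ^ a * 3 ^ b) + 1 = 2 ^ c * 3 ^ d) :
    2 ^ a * 3 ^ b = 1 ∨ 2 ^ a * 3 ^ b = 3 ∨ 2 ^ a * 3 ^ b = 16 := by
  have hc : 0 < a → c = 0 := fun ha => Nat.eq_zero_of_pow_dvd_add_one (by norm_num)
    (Dvd.dvd.mul_left (Dvd.dvd.mul_right (dvd_pow_self 2 ha.ne') _) _) (h ▸ dvd_mul_right _ _)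
  have hd : 0 < b → d = 0 := fun hb => Nat.eq_zero_of_pow_dvd_add_one (by norm_num)
    (Dvd.dvd.mul_left (Dvd.dvd.mul_left (dvd_pow_self 3 hb.ne') _) _) (h ▸ dvd_mul_left _ _)
  rcases Nat.eq_zero_or_pos a with rfl | ha <;> rcases Nat.eq_zero_or_pos b with rfl | hb
  · simp
  · rw [hd hb] at h
    simp only [pow_zero, one_mul, mul_one] at h ⊢
    obtain rfl | hb2 : b = 1 ∨ 2 ≤ b := by omega
    · norm_num
    · exact absurd h (five_mul_three_pow_add_one_ne_two_pow hb2 c)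
  · rw [hc ha] at h
    simp only [pow_zero, one_mul, mul_one] at h ⊢
    obtain ha4 | ha5 : a ≤ 4 ∨ 5 ≤ a := by omega
    · have h243 : 3 ^ d < 3 ^ 5 := by rw [← h]; interval_cases a <;> norm_num
      have hd5 : d < 5 := (Nat.pow_lt_pow_iff_right (by norm_num)).1 h243
      interval_cases a <;> interval_cases d <;> simp_all
    · exact absurd h (five_mul_two_pow_add_one_ne_three_pow ha5 d)
  · rw [hc ha, hd hb] at h
    have : 0 < 2 ^ a * 3 ^ b := by positivity
    omega

theorem holdout23_pos (n : ℕ) : 0 < holdout23 n := by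
  unfold holdout23
  positivity

theorem holdout23_dvd (n : ℕ) : holdout23 n ∣ n :=
  Nat.Coprime.mul_dvd_of_dvd_of_dvd (Nat.Coprime.pow _ _ (by norm_num))
    pow_padicValNat_dvd pow_padicValNat_dvd

theorem exists_eq_holdout23_mul {n : ℕ} (hn : n ≠ 0) :
    ∃ r, n = holdout23 n * r ∧ ¬2 ∣ r ∧ ¬3 ∣ r := by
  obtain ⟨r, hr⟩ := holdout23_dvd n
  refine ⟨r, hr, fun ⟨s, hs⟩ => ?_, fun ⟨s, hs⟩ => ?_⟩
  · exact pow_succ_padicValNat_not_dvd (p := 2) hn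
      ⟨3 ^ padicValNat 3 n * s, hr.trans (by rw [holdout23, hs]; ring)⟩
  · exact pow_succ_padicValNat_not_dvd (p := 3) hn
      ⟨2 ^ padicValNat 2 n * s, hr.trans (by rw [holdout23, hs]; ring)⟩

theorem holdout23_two_pow_mul_three_pow_mul (a b : ℕ) {r : ℕ} (h2 : ¬2 ∣ r) (h3 : ¬3 ∣ r) :
    holdout23 (2 ^ a * 3 ^ b * r) = 2 ^ a * 3 ^ b := by
  have hr : r ≠ 0 := by rintro rfl; simp at h2
  have h23 : ¬2 ∣ 3 ^ b := fun h => by simpa using Nat.Prime.dvd_of_dvd_pow Nat.prime_two h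
  have h32 : ¬3 ∣ 2 ^ a := fun h => by simpa using Nat.Prime.dvd_of_dvd_pow Nat.prime_three h
  rw [holdout23, padicValNat.mul (by positivity) hr, padicValNat.mul (by positivity) (by positivity),
    padicValNat.mul (by positivity) hr, padicValNat.mul (by positivity) (by positivity),
    padicValNat.prime_pow, padicValNat.prime_pow, padicValNat.eq_zero_of_not_dvd h2,
    padicValNat.eq_zero_of_not_dvd h3, padicValNat.eq_zero_of_not_dvd h23,
    padicValNat.eq_zero_of_not_dvd h32]
  simp

theorem G523_of_eq_holdout23 {n : ℕ} (h : n = holdout23 n) : G523 n = 5 * n + 1 := if_pos h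

theorem G523_of_ne_holdout23 {n : ℕ} (h : n ≠ holdout23 n) : G523 n = holdout23 n := if_neg h

theorem G523_two_pow_mul_three_pow (a b : ℕ) : G523 (2 ^ a * 3 ^ b) = 5 * (2 ^ a * 3 ^ b) + 1 := by
  have h := holdout23_two_pow_mul_three_pow_mul a b (r := 1) (by norm_num) (by norm_num)
  rw [mul_one] at h
  exact G523_of_eq_holdout23 h.symm

theorem G523_two_pow_mul_three_pow_mul (a b : ℕ) {r : ℕ} (h2 : ¬2 ∣ r) (h3 : ¬3 ∣ r)
    (h1 : r ≠ 1) : G523 (2 ^ a * 3 ^ b * r) = 2 ^ a * 3 ^ b := by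
  have hh := holdout23_two_pow_mul_three_pow_mul a b h2 h3
  have hne : 2 ^ a * 3 ^ b * r ≠ holdout23 (2 ^ a * 3 ^ b * r) := by
    rw [hh]
    exact fun h => h1 ((Nat.mul_eq_left (by positivity)).1 h)
  rw [G523_of_ne_holdout23 hne, hh]

theorem G523_iterate_sixteen : G523^[5] 16 = 1 := by
  have h16 : G523 16 = 81 := by simpa using G523_two_pow_mul_three_pow 4 0
  have h81 : G523 81 = 406 := by simpa using G523_two_pow_mul_three_pow 0 4
  have h406 : G523 406 = 2 := by
    simpa using G523_two_pow_mul_three_pow_mul 1 0 (r := 203) (by decide) (by decide) (by decide)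
  have h2 : G523 2 = 11 := by simpa using G523_two_pow_mul_three_pow 1 0
  have h11 : G523 11 = 1 := by
    simpa using G523_two_pow_mul_three_pow_mul 0 0 (r := 11) (by decide) (by decide) (by decide)
  show G523 (G523 (G523 (G523 (G523 16)))) = 1
  rw [h16, h81, h406, h2, h11]

theorem G523_iterate_three : G523^[6] 3 = 1 := by
  have h3 : G523 3 = 16 := by simpa using G523_two_pow_mul_three_pow 0 1
  rw [Function.iterate_succ_apply, h3, G523_iterate_sixteen]

theorem holdout23_lt {n : ℕ} (hn : 0 < n) (h : n ≠ holdout23 n) : holdout23 n < n :=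
  lt_of_le_of_ne (Nat.le_of_dvd hn (holdout23_dvd n)) (Ne.symm h)

theorem holdout23_five_mul_add_one_lt {n : ℕ} (h : 5 * n + 1 ≠ holdout23 (5 * n + 1)) :
    holdout23 (5 * n + 1) < n := by
  obtain ⟨r, hr, h2, h3⟩ := exists_eq_holdout23_mul (n := 5 * n + 1) (by omega)
  have hr1 : r ≠ 1 := by rintro rfl; exact h (hr.trans (mul_one _))
  have hr7 : 7 ≤ r := by
    by_contra! hr6
    interval_cases r <;> omega
  nlinarith [holdout23_pos (5 * n + 1)]

theorem eq_one_or_three_or_sixteen_of_holdout23_eq {n : ℕ} (hs : n = holdout23 n)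
    (hs' : 5 * n + 1 = holdout23 (5 * n + 1)) : n = 1 ∨ n = 3 ∨ n = 16 := by
  have h := eq_of_five_mul_two_pow_mul_three_pow_add_one_eq (a := padicValNat 2 n)
    (b := padicValNat 3 n) (c := padicValNat 2 (5 * n + 1)) (d := padicValNat 3 (5 * n + 1))
    (by change 5 * holdout23 n + 1 = holdout23 (5 * n + 1); rwa [← hs])
  change holdout23 n = 1 ∨ holdout23 n = 3 ∨ holdout23 n = 16 at h
  rwa [← hs] at h

theorem stmt_17 (n : ℕ) (hn : 0 < n) : ∃ k : ℕ, G523^[k] n = 1 := by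
  induction n using Nat.strong_induction_on with
  | _ n ih =>
  by_cases hs : n = holdout23 n
  · by_cases hs' : 5 * n + 1 = holdout23 (5 * n + 1)
    · rcases eq_one_or_three_or_sixteen_of_holdout23_eq hs hs' with rfl | rfl | rfl
      exacts [⟨0, rfl⟩, ⟨6, G523_iterate_three⟩, ⟨5, G523_iterate_sixteen⟩]
    · refine Function.exists_iterate_eq_of_exists_iterate_apply_eq
        (Function.exists_iterate_eq_of_exists_iterate_apply_eq ?_)
      rw [G523_of_eq_holdout23 hs, G523_of_ne_holdout23 hs']
      exact ih _ (holdout23_five_mul_add_one_lt hs') (holdout23_pos _)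
  · refine Function.exists_iterate_eq_of_exists_iterate_apply_eq ?_
    rw [G523_of_ne_holdout23 hs]
    exact ih _ (holdout23_lt hn hs) (holdout23_pos _)
end
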